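/- arXiv:1805.02454 — 4 statements merged into one kernel-verified Lean document; each statement's English description precedes it below -/
import Mathlib

section
/- Let q > 0, p > 2 and h ≥ 0. Then there exists a constant γ₀ > 0, depending only on p and q, such that for all real numbers a₁, a₂, b₁, b₂ (playing the roles of u(x), u(y), v(x), v(y)): ( |a₂ − a₁|^{p−2}(a₂ − a₁) − |b₂ − b₁|^{p−2}(b₂ − b₁) ) · ( ((a₂ − b₂ − h)₊)^q − ((a₁ − b₁ − h)₊)^q ) ≥ γ₀ · | ((a₂ − b₂ − h)₊)^{(q−1+p)/p} − ((a₁ − b₁ − h)₊)^{(q−1+p)/p} |^p, where s₊ = max(s,0) denotes the positive part. -/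
noncomputable section

open Set MeasureTheory

/-- A weighted graph: symmetric nonnegative weight, no loops, locally finite
(summable) weighted degree. -/
structure WG (V : Type*) where
  w : V → V → ℝ
  nonneg : ∀ x y, 0 ≤ w x y
  symm : ∀ x y, w x y = w y x
  loopless : ∀ x, w x x = 0
  locfin : ∀ x, Summable (w x)

namespace WG

variable {V : Type*} (g : WG V)

/-- The weighted degree `d_ω(x) = ∑_y ω(x,y)`. -/
def deg (x : V) : ℝ := ∑' y, g.w x y

/-- The underlying simple graph: `x ∼ y` iff `ω(x,y) > 0`. -/
def G : SimpleGraph V where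
  Adj x y := 0 < g.w x y
  symm := by
    constructor
    intro x y h
    rw [g.symm y x]
    exact h
  loopless := by
    constructor
    intro x h
    rw [g.loopless x] at h
    exact lt_irrefl 0 h

/-- The combinatorial graph distance. -/
def dist (x y : V) : ℕ := g.G.dist x y

/-- The ball `B_R(x₀)` for the combinatorial distance. -/
def ball (x₀ : V) (R : ℕ) : Set V := {x | g.dist x₀ x ≤ R}

/-- The weighted measure `μ_ω(U) = ∑_{x∈U} d_ω(x)`. -/
def mu (U : Set V) : ℝ := ∑' x : U, g.deg x

/-- The `q`-th power of the `ℓ^q(V)` norm: `∑_{x∈V} |f x|^q d_ω(x)`. -/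
def lqPow (q : ℝ) (f : V → ℝ) : ℝ := ∑' x, |f x| ^ q * g.deg x

/-- The `q`-th power of the `ℓ^q(U)` norm: `∑_{x∈U} |f x|^q d_ω(x)`. -/
def lqPowOn (q : ℝ) (U : Set V) (f : V → ℝ) : ℝ := ∑' x : U, |f x| ^ q * g.deg x

/-- The `ℓ^q(V)` norm. -/
def lqNorm (q : ℝ) (f : V → ℝ) : ℝ := (g.lqPow q f) ^ (1/q)

/-- The `ℓ^q(U)` norm. -/
def lqNormOn (q : ℝ) (U : Set V) (f : V → ℝ) : ℝ := (g.lqPowOn q U f) ^ (1/q)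

/-- Membership in `ℓ^q(V)` (absolute convergence of the defining sum). -/
def MemLq (q : ℝ) (f : V → ℝ) : Prop := Summable fun x => |f x| ^ q * g.deg x

/-- The discrete `p`-Laplacian. -/
def lapl (p : ℝ) (f : V → ℝ) (x : V) : ℝ :=
  (g.deg x)⁻¹ * ∑' y, |f y - f x| ^ (p - 2) * (f y - f x) * g.w x y

/-- A solution of `∂ₜ u = Δ_p u` on `V × (0,T)`: for each vertex, `u x` is `C¹`
on `[0,T]` and the equation holds pointwise on `(0,T)`. -/
def IsSol (p T : ℝ) (u : V → ℝ → ℝ) : Prop :=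
  (∀ x, ContDiffOn ℝ 1 (u x) (Icc 0 T)) ∧
  ∀ x t, t ∈ Ioo 0 T → HasDerivAt (u x) (g.lapl p (fun y => u y t) x) t

/-- A solution of `∂ₜ u = Δ_p u` on `V × (0,∞)`. -/
def IsSolInf (p : ℝ) (u : V → ℝ → ℝ) : Prop :=
  (∀ x, ContDiffOn ℝ 1 (u x) (Ici 0)) ∧
  ∀ x t, 0 < t → HasDerivAt (u x) (g.lapl p (fun y => u y t) x) t

/-- Class `L^∞(0,T; ℓ^q(V))`. -/
def BddLq (q T : ℝ) (u : V → ℝ → ℝ) : Prop :=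
  ∃ C : ℝ, ∀ t, 0 < t → t < T →
    g.MemLq q (fun x => u x t) ∧ g.lqPow q (fun x => u x t) ≤ C

/-- Class `L^∞(0,∞; ℓ^q(V))`. -/
def BddLqInf (q : ℝ) (u : V → ℝ → ℝ) : Prop :=
  ∃ C : ℝ, ∀ t, 0 < t →
    g.MemLq q (fun x => u x t) ∧ g.lqPow q (fun x => u x t) ≤ C

/-- The global Faber–Krahn inequality.  Note that if `f` vanishes outside `U`
then the sum of `|f y - f x|^p ω(x,y)` over `(U)₁ × (U)₁` coincides with the
sum over all of `V × V`, since nonzero terms require `x ∈ U` or `y ∈ U` and the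
other endpoint adjacent to it. -/
def FK (p : ℝ) (Λ : ℝ → ℝ) : Prop :=
  ∀ (U : Finset V) (f : V → ℝ), (∀ x, x ∉ U → f x = 0) →
    Λ (∑ x ∈ U, g.deg x) * ∑ x ∈ U, |f x| ^ p * g.deg x ≤
      ∑' x, ∑' y, |f y - f x| ^ p * g.w x y

end WG

/-- Structural assumptions on the Faber–Krahn function `Λ_p`: continuous,
decreasing, positive on `(0,∞)`, with `v ↦ Λ(v)⁻¹ v^{-p/N}` nondecreasing and
`v ↦ Λ(v)⁻¹ v^{-ϖ}` nonincreasing. -/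
def FKfun (p N ϖ : ℝ) (Λ : ℝ → ℝ) : Prop :=
  ContinuousOn Λ (Set.Ioi 0) ∧ StrictAntiOn Λ (Set.Ioi 0) ∧
  (∀ v, 0 < v → 0 < Λ v) ∧
  (∀ v₁ v₂, 0 < v₁ → v₁ ≤ v₂ → (Λ v₁)⁻¹ * v₁ ^ (-(p/N)) ≤ (Λ v₂)⁻¹ * v₂ ^ (-(p/N))) ∧
  (∀ v₁ v₂, 0 < v₁ → v₁ ≤ v₂ → (Λ v₂)⁻¹ * v₂ ^ (-ϖ) ≤ (Λ v₁)⁻¹ * v₁ ^ (-ϖ))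

/-- The scaling function `ψ_r(s) = s^{(p-2)/r} Λ(s⁻¹)`. -/
def psi (p r : ℝ) (Λ : ℝ → ℝ) (s : ℝ) : ℝ := s ^ ((p - 2)/r) * Λ s⁻¹

/-- `ψinv` is the inverse of `ψ_r`, assumed to be an increasing bijection of
`(0,∞)` onto itself. -/
def IsPsiInv (p r : ℝ) (Λ ψinv : ℝ → ℝ) : Prop :=
  StrictMonoOn (psi p r Λ) (Set.Ioi 0) ∧
  (∀ s, 0 < s → 0 < psi p r Λ s) ∧
  (∀ s, 0 < s → 0 < ψinv s) ∧
  (∀ s, 0 < s → psi p r Λ (ψinv s) = s) ∧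
  (∀ s, 0 < s → ψinv (psi p r Λ s) = s)

/-!
Write `φ(z) = |z|^{p-2} z` (`oddPow p`), `sᵢ = (aᵢ - bᵢ - h)₊` and `α = (q - 1 + p)/p`; by symmetry `s₁ ≤ s₂`.
Since the positive part is monotone and 1-Lipschitz, `A = a₂ - a₁` and `B = b₂ - b₁` satisfy
`s₂ - s₁ ≤ A - B`, and the strong monotonicity of `φ` gives `φ(A) - φ(B) ≥ 2^{2-p} (s₂ - s₁)^{p-1}`.
On the other side, `s₂^β - s₁^β ≤ max β 1 · s₂^{β-1} (s₂ - s₁)` for `β > 0`; applied to `s ↦ s^α`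
and to `s^q ↦ (s^q)^{α/q}`, and multiplied as `(s₂^α - s₁^α)^{p-1} · (s₂^α - s₁^α)`, this bounds
`(s₂^α - s₁^α)^p` by a multiple of `(s₂ - s₁)^{p-1} (s₂^q - s₁^q)`: the powers of `s₂` cancel
exactly because `α p = q - 1 + p`.
-/

namespace Real

lemma rpow_add_le_mul_rpow_add_rpow {a b r : ℝ} (ha : 0 ≤ a) (hb : 0 ≤ b) (hr : 1 ≤ r) :
    (a + b) ^ r ≤ 2 ^ (r - 1) * (a ^ r + b ^ r) := by
  lift a to NNReal using ha
  lift b to NNReal using hb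
  exact_mod_cast NNReal.rpow_add_le_mul_rpow_add_rpow a b hr

lemma one_sub_rpow_le_max_mul {t β : ℝ} (ht₀ : 0 ≤ t) (ht₁ : t ≤ 1) (hβ : 0 < β) :
    1 - t ^ β ≤ max β 1 * (1 - t) := by
  rcases le_or_gt 1 β with hβ₁ | hβ₁
  · have bernoulli := one_add_mul_self_le_rpow_one_add (s := t - 1) (by linarith) hβ₁
    rw [add_sub_cancel] at bernoulli
    rw [max_eq_left hβ₁]
    linarith
  · rw [max_eq_right hβ₁.le, one_mul]
    have := rpow_le_rpow_of_exponent_ge' ht₀ ht₁ hβ.le hβ₁.le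
    rw [rpow_one] at this
    linarith

lemma rpow_sub_rpow_le_max_mul {s₁ s₂ β : ℝ} (hs₁ : 0 ≤ s₁) (hs : s₁ ≤ s₂) (hβ : 0 < β) :
    s₂ ^ β - s₁ ^ β ≤ max β 1 * (s₂ ^ (β - 1) * (s₂ - s₁)) := by
  rcases (hs₁.trans hs).eq_or_lt with hs₂ | hs₂
  · obtain rfl : s₁ = 0 := le_antisymm (hs₂ ▸ hs) hs₁
    simp [← hs₂]
  · have scaled := mul_le_mul_of_nonneg_left
      (one_sub_rpow_le_max_mul (div_nonneg hs₁ hs₂.le) ((div_le_one hs₂).mpr hs) hβ)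
      (rpow_nonneg hs₂.le β)
    have hs₂β : s₂ ^ β = s₂ ^ (β - 1) * s₂ := by
      rw [← rpow_add_one hs₂.ne', sub_add_cancel]
    have hs₂β₀ : s₂ ^ β ≠ 0 := (rpow_pos_of_pos hs₂ β).ne'
    rw [div_rpow hs₁ hs₂.le] at scaled
    calc s₂ ^ β - s₁ ^ β = s₂ ^ β * (1 - s₁ ^ β / s₂ ^ β) := by field_simp
      _ ≤ s₂ ^ β * (max β 1 * (1 - s₁ / s₂)) := scaled
      _ = max β 1 * (s₂ ^ (β - 1) * (s₂ - s₁)) := by rw [hs₂β]; field_simp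

end Real

def oddPow (p z : ℝ) : ℝ := |z| ^ (p - 2) * z

lemma oddPow_neg (p z : ℝ) : oddPow p (-z) = -oddPow p z := by
  simp [oddPow]

lemma oddPow_of_nonneg {p z : ℝ} (hp : p ≠ 1) (hz : 0 ≤ z) : oddPow p z = z ^ (p - 1) := by
  have hp' : p - 2 + 1 ≠ 0 := fun h => hp (by linarith)
  rw [oddPow, abs_of_nonneg hz, ← Real.rpow_add_one' hz hp']
  ring_nf

lemma rpow_sub_le_oddPow_sub_oddPow {p x y : ℝ} (hp : 2 ≤ p) (hy : 0 ≤ y) (hxy : y ≤ x) :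
    (x - y) ^ (p - 1) ≤ oddPow p x - oddPow p y := by
  have superadd := Real.add_rpow_le_rpow_add (sub_nonneg.mpr hxy) hy (by linarith : 1 ≤ p - 1)
  rw [sub_add_cancel] at superadd
  rw [oddPow_of_nonneg (by linarith) (hy.trans hxy), oddPow_of_nonneg (by linarith) hy]
  linarith

lemma two_rpow_mul_rpow_sub_le_oddPow_sub_oddPow {p x y : ℝ} (hp : 2 ≤ p) (hxy : y ≤ x) :
    2 ^ (2 - p) * (x - y) ^ (p - 1) ≤ oddPow p x - oddPow p y := by
  have h2p : (2 : ℝ) ^ (2 - p) ≤ 1 := Real.rpow_le_one_of_one_le_of_nonpos one_le_two (by linarith)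
  have hxy' : 0 ≤ (x - y) ^ (p - 1) := Real.rpow_nonneg (sub_nonneg.mpr hxy) _
  rcases le_or_gt 0 y with hy | hy
  · exact (mul_le_of_le_one_left hxy' h2p).trans (rpow_sub_le_oddPow_sub_oddPow hp hy hxy)
  rcases le_or_gt x 0 with hx | hx
  · have := rpow_sub_le_oddPow_sub_oddPow hp (neg_nonneg.mpr hx) (neg_le_neg hxy)
    simp only [oddPow_neg, neg_sub_neg] at this
    exact (mul_le_of_le_one_left hxy' h2p).trans this
  · -- Only when `y < 0 < x` is the factor `2^{2-p}` needed, from the convexity of `t ↦ t^{p-1}`.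
    have hsplit : oddPow p x - oddPow p y = x ^ (p - 1) + (-y) ^ (p - 1) := by
      rw [← neg_neg (oddPow p y), ← oddPow_neg, oddPow_of_nonneg (by linarith) hx.le,
        oddPow_of_nonneg (by linarith) (by linarith), sub_neg_eq_add]
    have convex := Real.rpow_add_le_mul_rpow_add_rpow hx.le (neg_nonneg.mpr hy.le)
      (by linarith : 1 ≤ p - 1)
    have h2 : (2 : ℝ) ^ (2 - p) * 2 ^ (p - 1 - 1) = 1 := by
      rw [← Real.rpow_add two_pos, show 2 - p + (p - 1 - 1) = (0 : ℝ) by ring, Real.rpow_zero]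
    rw [← sub_eq_add_neg] at convex
    rw [hsplit]
    calc 2 ^ (2 - p) * (x - y) ^ (p - 1)
        ≤ 2 ^ (2 - p) * (2 ^ (p - 1 - 1) * (x ^ (p - 1) + (-y) ^ (p - 1))) := by gcongr
      _ = x ^ (p - 1) + (-y) ^ (p - 1) := by rw [← mul_assoc, h2, one_mul]

lemma rpow_sub_rpow_rpow_le {p q α s₁ s₂ : ℝ} (hp : 1 ≤ p) (hq : 0 < q)
    (hα : α * p = q - 1 + p) (hs₁ : 0 ≤ s₁) (hs : s₁ ≤ s₂) :
    (s₂ ^ α - s₁ ^ α) ^ p ≤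
      max α 1 ^ (p - 1) * max (α / q) 1 * ((s₂ - s₁) ^ (p - 1) * (s₂ ^ q - s₁ ^ q)) := by
  have hα₀ : 0 < α := by nlinarith
  rcases (hs₁.trans hs).eq_or_lt with hs₂ | hs₂
  · obtain rfl : s₁ = 0 := le_antisymm (hs₂ ▸ hs) hs₁
    simp [← hs₂, Real.zero_rpow (by linarith : p ≠ 0)]
  have hL : 0 ≤ s₂ ^ α - s₁ ^ α := sub_nonneg.mpr (Real.rpow_le_rpow hs₁ hs hα₀.le)
  have gap_α := Real.rpow_sub_rpow_le_max_mul hs₁ hs hα₀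
  have gap_q : s₂ ^ α - s₁ ^ α ≤ max (α / q) 1 * (s₂ ^ (α - q) * (s₂ ^ q - s₁ ^ q)) := by
    have gap := Real.rpow_sub_rpow_le_max_mul (Real.rpow_nonneg hs₁ q)
      (Real.rpow_le_rpow hs₁ hs hq.le) (div_pos hα₀ hq)
    rwa [← Real.rpow_mul hs₁, ← Real.rpow_mul hs₂.le, ← Real.rpow_mul hs₂.le,
      mul_sub_one, mul_div_cancel₀ _ hq.ne'] at gap
  have hcancel : (s₂ ^ (α - 1)) ^ (p - 1) * s₂ ^ (α - q) = 1 := by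
    rw [← Real.rpow_mul hs₂.le, ← Real.rpow_add hs₂,
      show (α - 1) * (p - 1) + (α - q) = 0 by linarith, Real.rpow_zero]
  calc (s₂ ^ α - s₁ ^ α) ^ p = (s₂ ^ α - s₁ ^ α) ^ (p - 1) * (s₂ ^ α - s₁ ^ α) := by
        rw [← Real.rpow_add_one' hL (by linarith), sub_add_cancel]
    _ ≤ (max α 1 * (s₂ ^ (α - 1) * (s₂ - s₁))) ^ (p - 1) *
          (max (α / q) 1 * (s₂ ^ (α - q) * (s₂ ^ q - s₁ ^ q))) :=
        mul_le_mul (Real.rpow_le_rpow hL gap_α (by linarith)) gap_q hL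
          (Real.rpow_nonneg (hL.trans gap_α) _)
    _ = max α 1 ^ (p - 1) * max (α / q) 1 * ((s₂ - s₁) ^ (p - 1) * (s₂ ^ q - s₁ ^ q)) *
          ((s₂ ^ (α - 1)) ^ (p - 1) * s₂ ^ (α - q)) := by
        rw [Real.mul_rpow (by positivity) (by positivity),
          Real.mul_rpow (by positivity) (sub_nonneg.mpr hs)]
        ring
    _ = _ := by rw [hcancel, mul_one]

lemma two_rpow_mul_abs_rpow_sub_rpow_rpow_le {p q α s₁ s₂ A B : ℝ} (hp : 2 ≤ p) (hq : 0 < q)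
    (hα : α * p = q - 1 + p) (hs₁ : 0 ≤ s₁) (hs : s₁ ≤ s₂) (hAB : s₂ - s₁ ≤ A - B) :
    2 ^ (2 - p) * |s₂ ^ α - s₁ ^ α| ^ p ≤
      max α 1 ^ (p - 1) * max (α / q) 1 * ((oddPow p A - oddPow p B) * (s₂ ^ q - s₁ ^ q)) := by
  have hα₀ : 0 < α := by nlinarith
  have hQ : 0 ≤ s₂ ^ q - s₁ ^ q := sub_nonneg.mpr (Real.rpow_le_rpow hs₁ hs hq.le)
  rw [abs_of_nonneg (sub_nonneg.mpr (Real.rpow_le_rpow hs₁ hs hα₀.le))]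
  calc 2 ^ (2 - p) * (s₂ ^ α - s₁ ^ α) ^ p
      ≤ 2 ^ (2 - p) * (max α 1 ^ (p - 1) * max (α / q) 1 *
          ((s₂ - s₁) ^ (p - 1) * (s₂ ^ q - s₁ ^ q))) := by
        gcongr
        exact rpow_sub_rpow_rpow_le (by linarith) hq hα hs₁ hs
    _ = max α 1 ^ (p - 1) * max (α / q) 1 *
          (2 ^ (2 - p) * (s₂ - s₁) ^ (p - 1) * (s₂ ^ q - s₁ ^ q)) := by ring
    _ ≤ max α 1 ^ (p - 1) * max (α / q) 1 *
          (2 ^ (2 - p) * (A - B) ^ (p - 1) * (s₂ ^ q - s₁ ^ q)) := by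
        gcongr
        linarith
    _ ≤ _ := by
        gcongr
        exact two_rpow_mul_rpow_sub_le_oddPow_sub_oddPow hp (by linarith)

/-- the monotonicity inequality of Lemma 2.1 (pointwise algebraic
form): for `q > 0`, `p > 2`, `h ≥ 0` there is `γ₀ = γ₀(p,q) > 0` with
`(|a₂-a₁|^{p-2}(a₂-a₁) - |b₂-b₁|^{p-2}(b₂-b₁)) · (((a₂-b₂-h)₊)^q - ((a₁-b₁-h)₊)^q)
  ≥ γ₀ |((a₂-b₂-h)₊)^{(q-1+p)/p} - ((a₁-b₁-h)₊)^{(q-1+p)/p}|^p`. -/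
theorem stmt9 (p q : ℝ) (hp : 2 < p) (hq : 0 < q) :
    ∃ γ₀ : ℝ, 0 < γ₀ ∧
      ∀ h a₁ a₂ b₁ b₂ : ℝ, 0 ≤ h →
        γ₀ * |(max (a₂ - b₂ - h) 0) ^ ((q - 1 + p)/p) -
              (max (a₁ - b₁ - h) 0) ^ ((q - 1 + p)/p)| ^ p ≤
        (|a₂ - a₁| ^ (p - 2) * (a₂ - a₁) - |b₂ - b₁| ^ (p - 2) * (b₂ - b₁)) *
          ((max (a₂ - b₂ - h) 0) ^ q - (max (a₁ - b₁ - h) 0) ^ q) := by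
  set α := (q - 1 + p) / p
  have hα : α * p = q - 1 + p := div_mul_cancel₀ _ (by linarith)
  have hC : 0 < max α 1 ^ (p - 1) * max (α / q) 1 := by positivity
  refine ⟨2 ^ (2 - p) / (max α 1 ^ (p - 1) * max (α / q) 1), by positivity, ?_⟩
  intro h a₁ a₂ b₁ b₂ _
  change _ ≤ (oddPow p (a₂ - a₁) - oddPow p (b₂ - b₁)) * _
  wlog hle : a₁ - b₁ ≤ a₂ - b₂ generalizing a₁ a₂ b₁ b₂
  · have swapped := this a₂ a₁ b₂ b₁ (by linarith)
    rw [abs_sub_comm, ← neg_sub a₂ a₁, ← neg_sub b₂ b₁, oddPow_neg, oddPow_neg] at swapped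
    linarith
  have hlip : max (a₂ - b₂ - h) 0 - max (a₁ - b₁ - h) 0 ≤ (a₂ - a₁) - (b₂ - b₁) :=
    (max_sub_max_le_max _ _ _ _).trans (max_le (by linarith) (by linarith))
  rw [div_mul_eq_mul_div, div_le_iff₀' hC]
  exact two_rpow_mul_abs_rpow_sub_rpow_rpow_le hp.le hq hα (le_max_right _ _)
    (max_le_max (by linarith) le_rfl) hlip
end
end

section
/- Let p > 2 and q > 0. Then there exists a constant γ > 0, depending only on p and q, such that for all real numbers a, b with 0 ≤ b ≤ a: ( a^{(q−1+p)/p} − b^{(q−1+p)/p} )^p ≤ γ · ( a^q − b^q ) · ( a − b )^{p−1}. -/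
noncomputable section

open Set MeasureTheory

open Real

lemma one_sub_rpow_le_mul_one_sub {β t : ℝ} (hβ : 1 ≤ β) (ht : 0 ≤ t) :
    1 - t ^ β ≤ β * (1 - t) := by
  have h := one_add_mul_self_le_rpow_one_add (s := t - 1) (by linarith) hβ
  rw [add_sub_cancel] at h
  linarith

/-- For `α ≤ m` this is monotonicity of `t ↦ t ^ s` on `[0, 1]` in the exponent; for `m < α`
it is Bernoulli's inequality applied to `t ^ m` with exponent `α / m`. -/
lemma one_sub_rpow_le_max_mul_one_sub_rpow {α m t : ℝ} (hα : 0 < α) (hm : 0 < m)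
    (ht0 : 0 ≤ t) (ht1 : t ≤ 1) :
    1 - t ^ α ≤ max 1 (α / m) * (1 - t ^ m) := by
  have hm1 : 0 ≤ 1 - t ^ m := sub_nonneg.2 (rpow_le_one ht0 ht1 hm.le)
  rcases le_or_gt α m with hαm | hmα
  · calc 1 - t ^ α ≤ 1 * (1 - t ^ m) := by
          linarith [rpow_le_rpow_of_exponent_ge' ht0 ht1 hα.le hαm]
      _ ≤ max 1 (α / m) * (1 - t ^ m) := by gcongr; exact le_max_left _ _
  · have hpow : (t ^ m) ^ (α / m) = t ^ α := by
      rw [← rpow_mul ht0, mul_div_cancel₀ _ hm.ne']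
    calc 1 - t ^ α ≤ α / m * (1 - t ^ m) := by
          rw [← hpow]
          exact one_sub_rpow_le_mul_one_sub ((one_le_div hm).2 hmα.le) (rpow_nonneg ht0 m)
      _ ≤ max 1 (α / m) * (1 - t ^ m) := by gcongr; exact le_max_right _ _

lemma one_sub_rpow_rpow_le {α m p t : ℝ} (hα : 0 < α) (hm : 0 < m) (hp : 1 ≤ p)
    (ht0 : 0 ≤ t) (ht1 : t ≤ 1) :
    (1 - t ^ α) ^ p ≤ max 1 (α / m) * max 1 α ^ (p - 1) * (1 - t ^ m) * (1 - t) ^ (p - 1) := by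
  have hα0 : 0 ≤ 1 - t ^ α := sub_nonneg.2 (rpow_le_one ht0 ht1 hα.le)
  have hbound : 1 - t ^ α ≤ max 1 α * (1 - t) := by
    simpa using one_sub_rpow_le_max_mul_one_sub_rpow hα one_pos ht0 ht1
  calc (1 - t ^ α) ^ p = (1 - t ^ α) * (1 - t ^ α) ^ (p - 1) := by
        rw [← rpow_one_add' hα0 (by linarith), add_sub_cancel]
    _ ≤ (max 1 (α / m) * (1 - t ^ m)) * (max 1 α * (1 - t)) ^ (p - 1) := by
        have hm1 : 0 ≤ 1 - t ^ m := sub_nonneg.2 (rpow_le_one ht0 ht1 hm.le)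
        exact mul_le_mul (one_sub_rpow_le_max_mul_one_sub_rpow hα hm ht0 ht1)
          (rpow_le_rpow hα0 hbound (by linarith)) (by positivity) (by positivity)
    _ = max 1 (α / m) * max 1 α ^ (p - 1) * (1 - t ^ m) * (1 - t) ^ (p - 1) := by
        rw [mul_rpow (by positivity) (by linarith)]
        ring

lemma rpow_sub_mul_rpow {a t : ℝ} (ha : 0 ≤ a) (ht : 0 ≤ t) (r : ℝ) :
    a ^ r - (a * t) ^ r = a ^ r * (1 - t ^ r) := by
  rw [mul_rpow ha ht]
  ring

/-- Both sides are homogeneous of degree `q + p - 1` in `(a, b)`, so it suffices to take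
`b = a * t` and apply `one_sub_rpow_rpow_le` with `α = (q - 1 + p) / p`. -/
theorem stmt10 (p q : ℝ) (hp : 2 < p) (hq : 0 < q) :
    ∃ γ : ℝ, 0 < γ ∧
      ∀ a b : ℝ, 0 ≤ b → b ≤ a →
        (a ^ ((q - 1 + p)/p) - b ^ ((q - 1 + p)/p)) ^ p ≤
          γ * (a ^ q - b ^ q) * (a - b) ^ (p - 1) := by
  set α := (q - 1 + p) / p
  have hα : 0 < α := div_pos (by linarith) (by linarith)
  have hαp : α * p = q + (p - 1) := by
    simp only [α]
    field_simp
    ring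
  refine ⟨max 1 (α / q) * max 1 α ^ (p - 1), by positivity, fun a b hb hba => ?_⟩
  have ha : 0 ≤ a := hb.trans hba
  obtain ⟨t, ht0, ht1, rfl⟩ : ∃ t, 0 ≤ t ∧ t ≤ 1 ∧ b = a * t := by
    rcases ha.eq_or_lt with rfl | ha
    · exact ⟨0, le_rfl, zero_le_one, by simp [le_antisymm hba hb]⟩
    · exact ⟨b / a, div_nonneg hb ha.le, (div_le_one ha).2 hba, by field_simp⟩
  have hα0 : 0 ≤ 1 - t ^ α := sub_nonneg.2 (rpow_le_one ht0 ht1 hα.le)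
  rw [rpow_sub_mul_rpow ha ht0, rpow_sub_mul_rpow ha ht0, show a - a * t = a * (1 - t) by ring,
    mul_rpow (rpow_nonneg ha α) hα0, ← rpow_mul ha, hαp, rpow_add' ha (by linarith),
    mul_rpow ha (by linarith)]
  calc a ^ q * a ^ (p - 1) * (1 - t ^ α) ^ p
      ≤ a ^ q * a ^ (p - 1) *
          (max 1 (α / q) * max 1 α ^ (p - 1) * (1 - t ^ q) * (1 - t) ^ (p - 1)) := by
        gcongr
        exact one_sub_rpow_rpow_le hα hq (by linarith) ht0 ht1
    _ = _ := by ring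
end
end

section
/- Let p > 2, r ≥ 1, and let Λ : (0,∞) → (0,∞) be nonincreasing. Suppose that ψ_r(s) = s^{(p−2)/r} Λ(s^{−1}) (s > 0) is an increasing bijection of (0,∞) onto itself with inverse ψ_r^{(−1)}. Then for each fixed s > 0 the function a ↦ a · [ ψ_r^{(−1)}( s a^{−(p−2)} ) ]^{1/r} is nondecreasing on (0,∞). -/
noncomputable section

open Set MeasureTheory

/-! Put `b = ψ_r⁻¹(s a^{-(p-2)})` and `x = a b^{1/r}`. Unfolding `ψ_r(b) = s a^{-(p-2)}` gives
`x^{p-2} Λ(b⁻¹) = s`. As `a` grows, `s a^{-(p-2)}` decreases, hence so does `b`, and since `Λ`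
is nonincreasing `Λ(b⁻¹)` can only decrease too; to keep the product equal to `s`, the factor
`x^{p-2}`, and with it `x`, cannot decrease. -/

theorem IsPsiInv.monotoneOn {p r : ℝ} {Λ ψinv : ℝ → ℝ} (hψ : IsPsiInv p r Λ ψinv) :
    MonotoneOn ψinv (Ioi 0) :=
  Function.monotoneOn_of_rightInvOn_of_mapsTo hψ.1.monotoneOn (fun _ hs => hψ.2.2.2.1 _ hs)
    (fun _ hs => hψ.2.2.1 _ hs)

theorem mul_rpow_mul_eq_of_psi_eq {p r a b s : ℝ} {Λ : ℝ → ℝ} (ha : 0 < a) (hb : 0 < b)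
    (h : psi p r Λ b = s * a ^ (-(p - 2))) : (a * b ^ (1 / r)) ^ (p - 2) * Λ b⁻¹ = s :=
  calc (a * b ^ (1 / r)) ^ (p - 2) * Λ b⁻¹ = a ^ (p - 2) * psi p r Λ b := by
        rw [psi, Real.mul_rpow ha.le (Real.rpow_nonneg hb.le _), ← Real.rpow_mul hb.le,
          one_div_mul_eq_div, mul_assoc]
    _ = s := by rw [h, mul_left_comm, ← Real.rpow_add ha, add_neg_cancel, Real.rpow_zero, mul_one]

theorem le_of_rpow_mul_eq_rpow_mul {e x₁ x₂ L₁ L₂ : ℝ} (he : 0 < e) (hx₁ : 0 ≤ x₁)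
    (hx₂ : 0 ≤ x₂) (hL₁ : 0 < L₁) (hL : L₂ ≤ L₁) (h : x₁ ^ e * L₁ = x₂ ^ e * L₂) :
    x₁ ≤ x₂ := by
  have hpow : x₁ ^ e * L₁ ≤ x₂ ^ e * L₁ :=
    h ▸ mul_le_mul_of_nonneg_left hL (Real.rpow_nonneg hx₂ e)
  exact (Real.rpow_le_rpow_iff hx₁ hx₂ he).1 (le_of_mul_le_mul_right hpow hL₁)

theorem stmt17_general (p r : ℝ) (hp : 2 < p)
    (Λ ψinv : ℝ → ℝ)
    (hΛ : AntitoneOn Λ (Ioi 0)) (hΛpos : ∀ v, 0 < v → 0 < Λ v)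
    (hψ : IsPsiInv p r Λ ψinv) :
    ∀ s, 0 < s → ∀ a₁ a₂ : ℝ, 0 < a₁ → a₁ ≤ a₂ →
      a₁ * (ψinv (s * a₁ ^ (-(p - 2)))) ^ (1/r) ≤
        a₂ * (ψinv (s * a₂ ^ (-(p - 2)))) ^ (1/r) := by
  have hmono := hψ.monotoneOn
  obtain ⟨-, -, hinv_pos, hpsi_inv, -⟩ := hψ
  intro s hs a₁ a₂ ha₁ h12
  have ha₂ : 0 < a₂ := ha₁.trans_le h12
  have hsa : ∀ a, 0 < a → s * a ^ (-(p - 2)) ∈ Ioi 0 := fun a ha => mem_Ioi.2 (by positivity)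
  have hb : ∀ a, 0 < a → 0 < ψinv (s * a ^ (-(p - 2))) := fun a ha => hinv_pos _ (hsa a ha)
  have hsolve : ∀ a, 0 < a →
      (a * ψinv (s * a ^ (-(p - 2))) ^ (1 / r)) ^ (p - 2) * Λ (ψinv (s * a ^ (-(p - 2))))⁻¹ = s :=
    fun a ha => mul_rpow_mul_eq_of_psi_eq ha (hb a ha) (hpsi_inv _ (hsa a ha))
  have hb_le : ψinv (s * a₂ ^ (-(p - 2))) ≤ ψinv (s * a₁ ^ (-(p - 2))) :=
    hmono (hsa a₂ ha₂) (hsa a₁ ha₁) <|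
      mul_le_mul_of_nonneg_left (Real.rpow_le_rpow_of_nonpos ha₁ h12 (by linarith)) hs.le
  have hx : ∀ a, 0 < a → 0 ≤ a * ψinv (s * a ^ (-(p - 2))) ^ (1 / r) :=
    fun a ha => (mul_pos ha (Real.rpow_pos_of_pos (hb a ha) _)).le
  refine le_of_rpow_mul_eq_rpow_mul (by linarith) (hx a₁ ha₁) (hx a₂ ha₂)
    (hΛpos _ (inv_pos.2 (hb a₁ ha₁))) ?_ ((hsolve a₁ ha₁).trans (hsolve a₂ ha₂).symm)
  exact hΛ (inv_pos.2 (hb a₁ ha₁)) (inv_pos.2 (hb a₂ ha₂)) (inv_anti₀ (hb a₂ ha₂) hb_le)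

/-- Remark 1.9: for nonincreasing `Λ`, the map
`a ↦ a · [ψ_r⁻¹(s a^{-(p-2)})]^{1/r}` is nondecreasing on `(0,∞)` for every
fixed `s > 0`. -/
theorem stmt17 (p r : ℝ) (hp : 2 < p) (hr : 1 ≤ r)
    (Λ ψinv : ℝ → ℝ)
    (hΛ : AntitoneOn Λ (Ioi 0)) (hΛpos : ∀ v, 0 < v → 0 < Λ v)
    (hψ : IsPsiInv p r Λ ψinv) :
    ∀ s, 0 < s → ∀ a₁ a₂ : ℝ, 0 < a₁ → a₁ ≤ a₂ →
      a₁ * (ψinv (s * a₁ ^ (-(p - 2)))) ^ (1/r) ≤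
        a₂ * (ψinv (s * a₂ ^ (-(p - 2)))) ^ (1/r) :=
  stmt17_general p r hp Λ ψinv hΛ hΛpos hψ
end
end

section
/- Suppose additionally there is c₀ > 0 with Λ_p(μ_ω(B_n(x₀))) ≥ c₀ n^{−p} for every integer n ≥ 1. Then for every c ≥ 1 there is a constant γ > 0, depending only on c, c₀, N and p, such that: if R ≥ 1 and s > 0 satisfy R^p = c s · [ ψ₁^{(−1)}(s^{−1}) ]^{p−2}, then μ_ω(B_{⌊R⌋}(x₀)) ≤ γ · [ ψ₁^{(−1)}(s^{−1}) ]^{−1}. -/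
noncomputable section

open Set MeasureTheory

/-!
Put `b = ψ₁⁻¹(s⁻¹)` and `m = μ_ω(B_⌊R⌋(x₀))`. Since `b^{p-2} Λ(b⁻¹) = s⁻¹`, the relation
`R^p = c s b^{p-2}` says `R^{-p} = c⁻¹ Λ(b⁻¹)`, so the volume lower bound gives
`Λ(m) ≥ (c₀/c) Λ(b⁻¹)`. If `m ≥ b⁻¹`, monotonicity of `v ↦ Λ(v)⁻¹ v^{-p/N}` yields
`(m b)^{p/N} ≤ Λ(b⁻¹)/Λ(m) ≤ c/c₀`; otherwise `m < b⁻¹` already.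
-/

namespace FKfun

variable {p N ϖ : ℝ} {Λ : ℝ → ℝ}

theorem apply_mul_rpow_le (hΛ : FKfun p N ϖ Λ) {v₁ v₂ : ℝ} (hv₁ : 0 < v₁) (h : v₁ ≤ v₂) :
    Λ v₂ * v₂ ^ (p / N) ≤ Λ v₁ * v₁ ^ (p / N) := by
  have hv₂ : 0 < v₂ := hv₁.trans_le h
  have hpos₁ : 0 < Λ v₁ * v₁ ^ (p / N) := mul_pos (hΛ.2.2.1 v₁ hv₁) (by positivity)
  have hpos₂ : 0 < Λ v₂ * v₂ ^ (p / N) := mul_pos (hΛ.2.2.1 v₂ hv₂) (by positivity)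
  have := hΛ.2.2.2.1 v₁ v₂ hv₁ h
  rwa [Real.rpow_neg hv₁.le, Real.rpow_neg hv₂.le, ← mul_inv, ← mul_inv,
    inv_le_inv₀ hpos₁ hpos₂] at this

theorem le_inv_rpow_mul_of_mul_le (hΛ : FKfun p N ϖ Λ) (hp : 0 < p) (hN : 0 < N) {κ v₁ v₂ : ℝ}
    (hκ : 0 < κ) (hv₁ : 0 < v₁) (h : v₁ ≤ v₂) (hΛv : κ * Λ v₁ ≤ Λ v₂) :
    v₂ ≤ κ⁻¹ ^ (N / p) * v₁ := by
  have hq : 0 < p / N := div_pos hp hN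
  have hv₂ : 0 < v₂ := hv₁.trans_le h
  have hΛv₁ : 0 < Λ v₁ := hΛ.2.2.1 v₁ hv₁
  have hpow : κ * v₂ ^ (p / N) ≤ v₁ ^ (p / N) := by
    refine le_of_mul_le_mul_left ?_ hΛv₁
    calc Λ v₁ * (κ * v₂ ^ (p / N)) = κ * Λ v₁ * v₂ ^ (p / N) := by ring
      _ ≤ Λ v₂ * v₂ ^ (p / N) := by gcongr
      _ ≤ Λ v₁ * v₁ ^ (p / N) := hΛ.apply_mul_rpow_le hv₁ h
  calc v₂ = (v₂ ^ (p / N)) ^ (p / N)⁻¹ := (Real.rpow_rpow_inv hv₂.le hq.ne').symm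
    _ ≤ (κ⁻¹ * v₁ ^ (p / N)) ^ (p / N)⁻¹ := by
        gcongr
        rwa [le_inv_mul_iff₀ hκ]
    _ = κ⁻¹ ^ (N / p) * v₁ := by
        rw [Real.mul_rpow (by positivity) (by positivity), Real.rpow_rpow_inv hv₁.le hq.ne',
          inv_div]

end FKfun

theorem IsPsiInv.rpow_neg_eq {p : ℝ} {Λ ψinv : ℝ → ℝ} (hψ : IsPsiInv p 1 Λ ψinv) {c s R : ℝ}
    (hs : 0 < s) (hR : 0 ≤ R) (hRs : R ^ p = c * s * (ψinv s⁻¹) ^ (p - 2)) :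
    R ^ (-p) = c⁻¹ * Λ (ψinv s⁻¹)⁻¹ := by
  have hpsi : (ψinv s⁻¹) ^ (p - 2) * Λ (ψinv s⁻¹)⁻¹ = s⁻¹ := by
    simpa [psi] using hψ.2.2.2.1 _ (inv_pos.2 hs)
  have hΛb : Λ (ψinv s⁻¹)⁻¹ = (s * (ψinv s⁻¹) ^ (p - 2))⁻¹ := by
    refine eq_inv_of_mul_eq_one_left ?_
    calc Λ (ψinv s⁻¹)⁻¹ * (s * (ψinv s⁻¹) ^ (p - 2))
        = s * ((ψinv s⁻¹) ^ (p - 2) * Λ (ψinv s⁻¹)⁻¹) := by ring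
      _ = 1 := by rw [hpsi, mul_inv_cancel₀ hs.ne']
  rw [Real.rpow_neg hR, hRs, hΛb, ← mul_inv, mul_assoc]

theorem rpow_neg_le_natFloor_rpow_neg {R p : ℝ} (hR : 1 ≤ R) (hp : 0 ≤ p) :
    R ^ (-p) ≤ (⌊R⌋₊ : ℝ) ^ (-p) :=
  Real.rpow_le_rpow_of_nonpos (by exact_mod_cast Nat.floor_pos.2 hR)
    (Nat.floor_le (zero_le_one.trans hR)) (neg_nonpos.2 hp)

theorem stmt19_general (p N ϖ c₀ c : ℝ) (hp : 2 < p) (hN : 0 < N)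
    (hc₀ : 0 < c₀) (hc : 1 ≤ c) :
    ∃ γ : ℝ, 0 < γ ∧
      ∀ (V : Type) (g : WG V) (x₀ : V) (Λ ψinv : ℝ → ℝ),
        FKfun p N ϖ Λ → IsPsiInv p 1 Λ ψinv →
        (∀ n : ℕ, 1 ≤ n → c₀ * (n : ℝ) ^ (-p) ≤ Λ (g.mu (g.ball x₀ n))) →
        ∀ R s : ℝ, 1 ≤ R → 0 < s →
          R ^ p = c * s * (ψinv s⁻¹) ^ (p - 2) →
          g.mu (g.ball x₀ (Nat.floor R)) ≤ γ * (ψinv s⁻¹)⁻¹ := by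
  have hp₀ : 0 < p := by linarith
  have hκ : 0 < c₀ / c := div_pos hc₀ (by linarith)
  refine ⟨max 1 ((c₀ / c)⁻¹ ^ (N / p)), by positivity, ?_⟩
  intro V g x₀ Λ ψinv hΛ hψ hvol R s hR hs hRs
  have hb : 0 < (ψinv s⁻¹)⁻¹ := inv_pos.2 (hψ.2.2.1 _ (inv_pos.2 hs))
  have hΛball : c₀ / c * Λ (ψinv s⁻¹)⁻¹ ≤ Λ (g.mu (g.ball x₀ ⌊R⌋₊)) :=
    calc c₀ / c * Λ (ψinv s⁻¹)⁻¹ = c₀ * R ^ (-p) := by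
          rw [hψ.rpow_neg_eq hs (by linarith) hRs, div_eq_mul_inv, mul_assoc]
      _ ≤ c₀ * (⌊R⌋₊ : ℝ) ^ (-p) :=
          mul_le_mul_of_nonneg_left (rpow_neg_le_natFloor_rpow_neg hR hp₀.le) hc₀.le
      _ ≤ _ := hvol _ (Nat.floor_pos.2 hR)
  rcases lt_or_ge (g.mu (g.ball x₀ ⌊R⌋₊)) (ψinv s⁻¹)⁻¹ with hsmall | hlarge
  · exact hsmall.le.trans (le_mul_of_one_le_left hb.le (le_max_left _ _))
  · exact (hΛ.le_inv_rpow_mul_of_mul_le hp₀ hN hκ hb hlarge hΛball).trans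
      (mul_le_mul_of_nonneg_right (le_max_right _ _) hb.le)

/-- Lemma 2.8: under the volume lower bound
`Λ_p(μ_ω(B_n(x₀))) ≥ c₀ n^{-p}`, if `R^p = c s [ψ₁⁻¹(s⁻¹)]^{p-2}` with `c ≥ 1`
then `μ_ω(B_{⌊R⌋}(x₀)) ≤ γ [ψ₁⁻¹(s⁻¹)]⁻¹`. -/
theorem stmt19 (p N ϖ c₀ c : ℝ) (hp : 2 < p) (hN : 0 < N) (hϖ : 0 < ϖ)
    (hc₀ : 0 < c₀) (hc : 1 ≤ c) :
    ∃ γ : ℝ, 0 < γ ∧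
      ∀ (V : Type) (g : WG V) (x₀ : V) (Λ ψinv : ℝ → ℝ),
        FKfun p N ϖ Λ → IsPsiInv p 1 Λ ψinv →
        (∀ n : ℕ, 1 ≤ n → c₀ * (n : ℝ) ^ (-p) ≤ Λ (g.mu (g.ball x₀ n))) →
        ∀ R s : ℝ, 1 ≤ R → 0 < s →
          R ^ p = c * s * (ψinv s⁻¹) ^ (p - 2) →
          g.mu (g.ball x₀ (Nat.floor R)) ≤ γ * (ψinv s⁻¹)⁻¹ :=
  stmt19_general p N ϖ c₀ c hp hN hc₀ hc
end
end
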